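/- Let A be a continuous Q-matrix-valued function on [0,∞) and let Y be a K-valued progressively measurable process on a filtered probability space that solves the martingale problem for G_AB = G_A + G_B on C³. Then for every multi-index α ∈ ℤ_+^r with n = |α| ≥ 1 and every t ≥ 0, E[ ∏_i Y_i(t)^{α_i} ] = E[ ∏_i Y_i(0)^{α_i} ] + ∫_0^t { (1/2) Σ_{i=1}^r α_i(α_i − 1) E[ ∏_l Y_l(s)^{α_l − δ_{l,i}} ] − (1/2)(n² − n) E[ ∏_l Y_l(s)^{α_l} ] + Σ_{j=1}^r α_j a_{j,j}(s) E[ ∏_l Y_l(s)^{α_l} ] + Σ_{k=1}^r Σ_{j ≠ k} α_j a_{k,j}(s) E[ ∏_l Y_l(s)^{α_l − δ_{l,j} + δ_{l,k}} ] } ds. -/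

import Mathlib

/-!
For the monomial `f p = ∏ pᵢ ^ αᵢ`, the Euler relation `pⱼ ∂ⱼ f = αⱼ f` turns `G_A f` and
`G_B f` into linear combinations of monomials whose expectations are the moments in the
integrand. The martingale property equates the expectations of `f (Y t) - ∫₀ᵗ G_AB f (Y s) ds`
at times `t` and `0`; the drift is bounded on `[0, t] × Ω` because `Y` takes values in the
compact simplex and `A` is continuous, so Fubini lets expectation and time integral commute.
-/

open scoped BigOperators NNReal
open Finset MeasureTheory

noncomputable section

/-- A Q-matrix: nonnegative off-diagonal entries, rows summing to zero. -/
def IsQMatrix {r : ℕ} (M : Matrix (Fin r) (Fin r) ℝ) : Prop :=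
  (∀ i j, i ≠ j → 0 ≤ M i j) ∧ ∀ i, ∑ j, M i j = 0

/-- The first-order generator `G_A f(p) = ∑_(i,j) pᵢ aᵢⱼ ∂f/∂xⱼ(p)`, with matrix argument. -/
def GA {r : ℕ} (M : Matrix (Fin r) (Fin r) ℝ) (f : (Fin r → ℝ) → ℝ) (p : Fin r → ℝ) : ℝ :=
  ∑ i, ∑ j, p i * M i j * fderiv ℝ f p (Pi.single j 1)

/-- The Wright–Fisher generator `G_B f(p) = (1/2) ∑_(i,j) pᵢ(δᵢⱼ − pⱼ) ∂²f/∂xᵢ∂xⱼ(p)`. -/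
def GB {r : ℕ} (f : (Fin r → ℝ) → ℝ) (p : Fin r → ℝ) : ℝ :=
  (1 / 2) * ∑ i, ∑ j,
    p i * ((if i = j then (1 : ℝ) else 0) - p j) *
      fderiv ℝ (fun x => fderiv ℝ f x (Pi.single j 1)) p (Pi.single i 1)

section Monomial

variable {ι : Type*}

-- The factor `β j` absorbs the truncated `0 - 1` of `ℕ`.
theorem natCast_mul_natCast_sub_single_apply [DecidableEq ι] (β : ι → ℕ) (i j : ι) :
    (β j : ℝ) * ((β - Pi.single j 1 : ι → ℕ) i : ℕ) = β j * (β i - if i = j then 1 else 0) := by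
  by_cases hij : i = j
  · subst hij
    rcases Nat.eq_zero_or_pos (β i) with h | h
    · simp [h]
    · simp [Nat.cast_sub h]
  · simp [hij]

variable [Fintype ι]

def monomialFn (β : ι → ℕ) (x : ι → ℝ) : ℝ := ∏ l, x l ^ β l

theorem contDiff_monomialFn (β : ι → ℕ) {n : WithTop ℕ∞} : ContDiff ℝ n (monomialFn β) :=
  contDiff_prod fun l _ => (contDiff_apply ℝ ℝ l).pow _

variable [DecidableEq ι]

theorem monomialFn_eq_pow_mul_prod_erase (β : ι → ℕ) (x : ι → ℝ) (j : ι) :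
    monomialFn β x = x j ^ β j * ∏ l ∈ univ.erase j, x l ^ β l :=
  (mul_prod_erase _ _ (mem_univ j)).symm

theorem monomialFn_sub_single (β : ι → ℕ) (x : ι → ℝ) (j : ι) :
    monomialFn (β - Pi.single j 1) x = x j ^ (β j - 1) * ∏ l ∈ univ.erase j, x l ^ β l := by
  rw [monomialFn_eq_pow_mul_prod_erase _ _ j]
  congr 1
  · simp
  · exact prod_congr rfl fun l hl => by simp [Pi.single_eq_of_ne (ne_of_mem_erase hl)]

theorem mul_monomialFn (β : ι → ℕ) (x : ι → ℝ) (k : ι) :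
    x k * monomialFn β x = monomialFn (β + Pi.single k 1) x := by
  rw [monomialFn_eq_pow_mul_prod_erase _ _ k, monomialFn_eq_pow_mul_prod_erase _ _ k]
  have : ∏ l ∈ univ.erase k, x l ^ (β + Pi.single k 1 : ι → ℕ) l = ∏ l ∈ univ.erase k, x l ^ β l :=
    prod_congr rfl fun l hl => by simp [Pi.single_eq_of_ne (ne_of_mem_erase hl)]
  rw [this, Pi.add_apply, Pi.single_eq_same, pow_succ]
  ring

theorem natCast_mul_mul_monomialFn_sub_single (β : ι → ℕ) (x : ι → ℝ) (j : ι) :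
    (β j : ℝ) * (x j * monomialFn (β - Pi.single j 1) x) = β j * monomialFn β x := by
  rcases eq_or_ne (β j) 0 with h | h
  · simp [h]
  · rw [monomialFn_sub_single, monomialFn_eq_pow_mul_prod_erase _ _ j, ← mul_assoc (x j),
      mul_pow_sub_one h]

theorem fderiv_monomialFn_single (β : ι → ℕ) (x : ι → ℝ) (j : ι) :
    fderiv ℝ (monomialFn β) x (Pi.single j 1) = β j * monomialFn (β - Pi.single j 1) x := by
  have hd : ∀ l ∈ (univ : Finset ι), HasFDerivAt (fun y : ι → ℝ => y l ^ β l)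
      ((β l * x l ^ (β l - 1) : ℝ) • ContinuousLinearMap.proj l) x := fun l _ =>
    (hasDerivAt_pow (β l) (x l)).comp_hasFDerivAt x
      (ContinuousLinearMap.proj l : (ι → ℝ) →L[ℝ] ℝ).hasFDerivAt
  rw [show monomialFn β = fun y => ∏ l, y l ^ β l from rfl, (HasFDerivAt.finsetProd hd).fderiv]
  simp only [_root_.sum_apply, smul_apply,
    ContinuousLinearMap.proj_apply, Pi.single_apply, smul_eq_mul, mul_ite, mul_one, mul_zero,
    sum_ite_eq', mem_univ, if_true, monomialFn_sub_single]
  ring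

theorem mul_fderiv_monomialFn_single (β : ι → ℕ) (x : ι → ℝ) (j : ι) :
    x j * fderiv ℝ (monomialFn β) x (Pi.single j 1) = β j * monomialFn β x := by
  rw [fderiv_monomialFn_single, ← natCast_mul_mul_monomialFn_sub_single]
  ring

theorem fderiv_fderiv_monomialFn_single (β : ι → ℕ) (x : ι → ℝ) (i j : ι) :
    fderiv ℝ (fun y => fderiv ℝ (monomialFn β) y (Pi.single j 1)) x (Pi.single i 1)
      = β j * fderiv ℝ (monomialFn (β - Pi.single j 1)) x (Pi.single i 1) := by
  simp_rw [fderiv_monomialFn_single β _ j]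
  rw [fderiv_const_mul ((contDiff_monomialFn _ (n := 1)).differentiable one_ne_zero x)]
  rfl

theorem mul_fderiv_fderiv_monomialFn_single (β : ι → ℕ) (x : ι → ℝ) (i j : ι) :
    x i * fderiv ℝ (fun y => fderiv ℝ (monomialFn β) y (Pi.single j 1)) x (Pi.single i 1)
      = β j * ((β - Pi.single j 1 : ι → ℕ) i : ℕ) * monomialFn (β - Pi.single j 1) x := by
  rw [fderiv_fderiv_monomialFn_single, mul_left_comm, mul_fderiv_monomialFn_single, mul_assoc]

theorem mul_mul_fderiv_fderiv_monomialFn_single (β : ι → ℕ) (x : ι → ℝ) (i j : ι) :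
    x i * x j * fderiv ℝ (fun y => fderiv ℝ (monomialFn β) y (Pi.single j 1)) x (Pi.single i 1)
      = β j * (β i - if i = j then 1 else 0) * monomialFn β x := by
  rw [mul_right_comm, mul_fderiv_fderiv_monomialFn_single]
  linear_combination
    ((β - Pi.single j 1 : ι → ℕ) i : ℝ) * natCast_mul_mul_monomialFn_sub_single β x j
      + monomialFn β x * natCast_mul_natCast_sub_single_apply β i j

theorem mul_fderiv_fderiv_monomialFn_single_self (β : ι → ℕ) (x : ι → ℝ) (i : ι) :
    x i * fderiv ℝ (fun y => fderiv ℝ (monomialFn β) y (Pi.single i 1)) x (Pi.single i 1)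
      = β i * (β i - 1) * monomialFn (β - Pi.single i 1) x := by
  rw [mul_fderiv_fderiv_monomialFn_single, natCast_mul_natCast_sub_single_apply, if_pos rfl]

end Monomial

section Generator

variable {r : ℕ}

theorem GA_monomialFn (M : Matrix (Fin r) (Fin r) ℝ) (α : Fin r → ℕ) (p : Fin r → ℝ) :
    GA M (monomialFn α) p
      = ∑ j, (α j : ℝ) * M j j * monomialFn α p
        + ∑ k, ∑ j ∈ univ.erase k,
            (α j : ℝ) * M k j * monomialFn (α - Pi.single j 1 + Pi.single k 1) p := by
  rw [GA, ← sum_add_distrib]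
  refine sum_congr rfl fun k _ => ?_
  rw [← add_sum_erase _ _ (mem_univ k)]
  congr 1
  · linear_combination M k k * mul_fderiv_monomialFn_single α p k
  · refine sum_congr rfl fun j _ => ?_
    rw [fderiv_monomialFn_single, ← mul_monomialFn]
    ring

theorem GB_monomialFn (α : Fin r → ℕ) (p : Fin r → ℝ) :
    GB (monomialFn α) p
      = (1 / 2) * ∑ i, ((α i : ℝ) * ((α i : ℝ) - 1)) * monomialFn (α - Pi.single i 1) p
        - (1 / 2) * (((∑ i, α i : ℕ) : ℝ) ^ 2 - ((∑ i, α i : ℕ) : ℝ)) * monomialFn α p := by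
  have hterm : ∀ i j, p i * ((if i = j then (1 : ℝ) else 0) - p j) *
      fderiv ℝ (fun x => fderiv ℝ (monomialFn α) x (Pi.single j 1)) p (Pi.single i 1)
      = (if i = j then (α i : ℝ) * (α i - 1) * monomialFn (α - Pi.single i 1) p else 0)
        - α j * (α i - if i = j then 1 else 0) * monomialFn α p := by
    intro i j
    rw [← mul_mul_fderiv_fderiv_monomialFn_single]
    split_ifs with hij
    · subst hij
      rw [← mul_fderiv_fderiv_monomialFn_single_self]
      ring
    · ring
  have hsum : ∑ i : Fin r, ∑ j, (α j : ℝ) * (α i - if i = j then 1 else 0)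
      = ((∑ i, α i : ℕ) : ℝ) ^ 2 - ((∑ i, α i : ℕ) : ℝ) := by
    simp [mul_sub, sum_sub_distrib, ← sum_mul, ← mul_sum, sq]
  simp only [GB, hterm, sum_sub_distrib, sum_ite_eq, mem_univ, if_true, ← sum_mul, hsum]
  ring

theorem integral_GA_add_GB_monomialFn {Ω : Type*} {mΩ : MeasurableSpace Ω} {μ : Measure Ω}
    {X : Ω → Fin r → ℝ} (hX : ∀ β, Integrable (fun ω => monomialFn β (X ω)) μ)
    (M : Matrix (Fin r) (Fin r) ℝ) (α : Fin r → ℕ) :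
    ∫ ω, (GA M (monomialFn α) (X ω) + GB (monomialFn α) (X ω)) ∂μ
      = (1 / 2) * ∑ i, ((α i : ℝ) * ((α i : ℝ) - 1)) *
            ∫ ω, monomialFn (α - Pi.single i 1) (X ω) ∂μ
        - (1 / 2) * (((∑ i, α i : ℕ) : ℝ) ^ 2 - ((∑ i, α i : ℕ) : ℝ)) *
            ∫ ω, monomialFn α (X ω) ∂μ
        + ∑ j, (α j : ℝ) * M j j * ∫ ω, monomialFn α (X ω) ∂μ
        + ∑ k, ∑ j ∈ univ.erase k, (α j : ℝ) * M k j *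
            ∫ ω, monomialFn (α - Pi.single j 1 + Pi.single k 1) (X ω) ∂μ := by
  simp only [GA_monomialFn, GB_monomialFn]
  simp (disch := fun_prop (disch := exact hX _)) only
    [integral_add, integral_sub, integral_finsetSum, integral_const_mul]
  ring

end Generator

section Probability

variable {Ω E : Type*} {mΩ : MeasurableSpace Ω} [TopologicalSpace E]

theorem integrable_comp_of_ae_mem_isCompact {μ : Measure Ω} [IsFiniteMeasure μ]
    {g : E → ℝ} {X : Ω → E} {S : Set E} (hS : IsCompact S) (hg : ContinuousOn g S)
    (hgX : AEStronglyMeasurable (fun ω => g (X ω)) μ) (hXS : ∀ᵐ ω ∂μ, X ω ∈ S) :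
    Integrable (fun ω => g (X ω)) μ := by
  obtain ⟨C, hC⟩ := hS.exists_bound_of_continuousOn hg
  exact Integrable.of_bound hgX C (hXS.mono fun ω hω => hC _ hω)

theorem MeasureTheory.IsStronglyProgressive.stronglyMeasurable_min_toNNReal
    {ℱ : Filtration ℝ≥0 mΩ} {Y : ℝ≥0 → Ω → E} (hY : IsStronglyProgressive ℱ Y) (t : ℝ≥0) :
    StronglyMeasurable fun q : Ω × ℝ => Y (min q.2.toNNReal t) q.1 := by
  have hι : @Measurable (Ω × ℝ) (Set.Iic t × Ω) _ (Prod.instMeasurableSpace (m₂ := ℱ t))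
      fun q => (⟨min q.2.toNNReal t, Set.mem_Iic.mpr (min_le_right _ _)⟩, q.1) :=
    (measurable_snd.real_toNNReal.min measurable_const).subtype_mk.prodMk
      (measurable_fst.mono le_rfl (ℱ.le t))
  exact (hY t).comp_measurable hι

theorem MeasureTheory.IsStronglyProgressive.integral_intervalIntegral_comm
    {μ : Measure Ω} [IsFiniteMeasure μ] {ℱ : Filtration ℝ≥0 mΩ} {Y : ℝ≥0 → Ω → E}
    (hY : IsStronglyProgressive ℱ Y) {S : Set E} (hS : IsCompact S) (hYS : ∀ t ω, Y t ω ∈ S)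
    {Φ : ℝ → E → ℝ} (hΦ : Continuous (Function.uncurry Φ)) (t : ℝ≥0) :
    ∫ ω, (∫ s in (0 : ℝ)..t, Φ s (Y s.toNNReal ω)) ∂μ
      = ∫ s in (0 : ℝ)..t, ∫ ω, Φ s (Y s.toNNReal ω) ∂μ := by
  -- `hY` only controls `Y` on `[0, t] × Ω`; clamping time at `t` gives a jointly measurable
  -- process that agrees with `Y` for almost every `s ∈ (0, t]`.
  set ν := (volume : Measure ℝ).restrict (Set.Ioc 0 t)
  have hν : ∀ᵐ q ∂(μ.prod ν), q.2 ∈ Set.Ioc (0 : ℝ) t :=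
    Measure.QuasiMeasurePreserving.ae (Measure.quasiMeasurePreserving_snd)
      (ae_restrict_mem measurableSet_Ioc)
  have hmin : (fun q : Ω × ℝ => Φ q.2 (Y (min q.2.toNNReal t) q.1))
      =ᵐ[μ.prod ν] fun q => Φ q.2 (Y q.2.toNNReal q.1) := by
    filter_upwards [hν] with q hq
    rw [min_eq_left (Real.toNNReal_le_iff_le_coe.mpr hq.2)]
  have hint : Integrable (Function.uncurry fun ω s => Φ s (Y s.toNNReal ω)) (μ.prod ν) := by
    refine integrable_comp_of_ae_mem_isCompact (X := fun q : Ω × ℝ => (q.2, Y q.2.toNNReal q.1))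
      ((isCompact_Icc (a := 0) (b := (t : ℝ))).prod hS) hΦ.continuousOn ?_ ?_
    · have hjoint := IsStronglyProgressive.stronglyMeasurable_min_toNNReal hY t
      exact (hΦ.comp_stronglyMeasurable (measurable_snd.stronglyMeasurable.prodMk hjoint)
        ).aestronglyMeasurable.congr hmin
    · filter_upwards [hν] with q hq
      exact ⟨Set.Ioc_subset_Icc_self hq, hYS _ _⟩
  simp_rw [intervalIntegral.integral_of_le t.coe_nonneg]
  exact integral_integral_swap hint

end Probability

theorem moment_evolution_equation_general
    (r : ℕ)
    (A : ℝ → Matrix (Fin r) (Fin r) ℝ)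
    (hAcont : Continuous A)
    {Ω : Type*} {mΩ : MeasurableSpace Ω} (μ : Measure Ω) [IsProbabilityMeasure μ]
    (ℱ : Filtration ℝ≥0 mΩ)
    (Y : ℝ≥0 → Ω → (Fin r → ℝ))
    (hprog : ProgMeasurable ℱ Y)
    (hK : ∀ t ω, (∀ i, 0 ≤ Y t ω i) ∧ ∑ i, Y t ω i = 1)
    (hmart : ∀ f : (Fin r → ℝ) → ℝ, ContDiff ℝ 3 f →
      Martingale
        (fun t ω => f (Y t ω) -
          ∫ s in (0:ℝ)..(t:ℝ), (GA (A s) f (Y s.toNNReal ω) + GB f (Y s.toNNReal ω)))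
        ℱ μ)
    (α : Fin r → ℕ) (t : ℝ≥0) :
    (∫ ω, ∏ i, (Y t ω i) ^ α i ∂μ)
      = (∫ ω, ∏ i, (Y 0 ω i) ^ α i ∂μ)
        + ∫ s in (0:ℝ)..(t:ℝ),
            ((1 / 2) * ∑ i, ((α i : ℝ) * ((α i : ℝ) - 1)) *
                (∫ ω, ∏ l, (Y s.toNNReal ω l) ^ (α l - if l = i then 1 else 0) ∂μ)
             - (1 / 2) * (((∑ i, α i : ℕ) : ℝ) ^ 2 - ((∑ i, α i : ℕ) : ℝ)) *
                (∫ ω, ∏ l, (Y s.toNNReal ω l) ^ α l ∂μ)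
             + (∑ j, (α j : ℝ) * A s j j * (∫ ω, ∏ l, (Y s.toNNReal ω l) ^ α l ∂μ))
             + ∑ k, ∑ j ∈ Finset.univ.erase k, (α j : ℝ) * A s k j *
                (∫ ω, ∏ l, (Y s.toNNReal ω l) ^
                    (α l - (if l = j then 1 else 0) + if l = k then 1 else 0) ∂μ)) := by
  have hsimplex : ∀ t ω, Y t ω ∈ stdSimplex ℝ (Fin r) := hK
  have hmoment : ∀ u β, Integrable (fun ω => monomialFn β (Y u ω)) μ := fun u β =>
    integrable_comp_of_ae_mem_isCompact (isCompact_stdSimplex ℝ (Fin r))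
      (contDiff_monomialFn β (n := 0)).continuous.continuousOn
      ((contDiff_monomialFn β (n := 0)).continuous.comp_stronglyMeasurable
        ((IsStronglyProgressive.stronglyAdapted hprog u).mono (ℱ.le u))).aestronglyMeasurable
      (ae_of_all _ (hsimplex u))
  have hM := hmart (monomialFn α) (contDiff_monomialFn α)
  have hdrift_cont : Continuous (Function.uncurry fun s p =>
      GA (A s) (monomialFn α) p + GB (monomialFn α) p) := by
    simp only [Function.uncurry_def, GA_monomialFn, GB_monomialFn, monomialFn]
    fun_prop
  have hdrift_int : Integrable (fun ω => ∫ s in (0:ℝ)..(t:ℝ),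
      (GA (A s) (monomialFn α) (Y s.toNNReal ω) + GB (monomialFn α) (Y s.toNNReal ω))) μ :=
    ((hmoment t α).sub (hM.integrable t)).congr (ae_of_all _ fun ω => sub_sub_cancel _ _)
  have hmean := hM.setIntegral_eq (zero_le : 0 ≤ t) MeasurableSet.univ
  simp only [setIntegral_univ, NNReal.coe_zero, intervalIntegral.integral_same, sub_zero] at hmean
  rw [integral_sub (hmoment t α) hdrift_int, IsStronglyProgressive.integral_intervalIntegral_comm
    hprog (isCompact_stdSimplex ℝ (Fin r)) hsimplex hdrift_cont t] at hmean
  simp only [integral_GA_add_GB_monomialFn (hmoment _)] at hmean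
  simp only [monomialFn, Pi.add_apply, Pi.sub_apply, Pi.single_apply] at hmean
  linear_combination -hmean

/-- Moment evolution equation for a solution of the martingale problem for
`G_AB = G_A + G_B` on C³ functions, with `A` a continuous Q-matrix-valued path:
for every multi-index `α` with `n = |α| ≥ 1` and every `t ≥ 0`,
`E[∏ᵢ Yᵢ(t)^αᵢ]` equals `E[∏ᵢ Yᵢ(0)^αᵢ]` plus the time integral of the displayed
combination of moments. -/
theorem moment_evolution_equation
    (r : ℕ) (hr : 2 ≤ r)
    (A : ℝ → Matrix (Fin r) (Fin r) ℝ)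
    (hAcont : Continuous A)
    (hAQ : ∀ t : ℝ, 0 ≤ t → IsQMatrix (A t))
    {Ω : Type*} {mΩ : MeasurableSpace Ω} (μ : Measure Ω) [IsProbabilityMeasure μ]
    (ℱ : Filtration ℝ≥0 mΩ)
    (Y : ℝ≥0 → Ω → (Fin r → ℝ))
    (hprog : ProgMeasurable ℱ Y)
    (hK : ∀ t ω, (∀ i, 0 ≤ Y t ω i) ∧ ∑ i, Y t ω i = 1)
    (hmart : ∀ f : (Fin r → ℝ) → ℝ, ContDiff ℝ 3 f →
      Martingale
        (fun t ω => f (Y t ω) -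
          ∫ s in (0:ℝ)..(t:ℝ), (GA (A s) f (Y s.toNNReal ω) + GB f (Y s.toNNReal ω)))
        ℱ μ)
    (α : Fin r → ℕ) (hα : 1 ≤ ∑ i, α i) (t : ℝ≥0) :
    (∫ ω, ∏ i, (Y t ω i) ^ α i ∂μ)
      = (∫ ω, ∏ i, (Y 0 ω i) ^ α i ∂μ)
        + ∫ s in (0:ℝ)..(t:ℝ),
            ((1 / 2) * ∑ i, ((α i : ℝ) * ((α i : ℝ) - 1)) *
                (∫ ω, ∏ l, (Y s.toNNReal ω l) ^ (α l - if l = i then 1 else 0) ∂μ)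
             - (1 / 2) * (((∑ i, α i : ℕ) : ℝ) ^ 2 - ((∑ i, α i : ℕ) : ℝ)) *
                (∫ ω, ∏ l, (Y s.toNNReal ω l) ^ α l ∂μ)
             + (∑ j, (α j : ℝ) * A s j j * (∫ ω, ∏ l, (Y s.toNNReal ω l) ^ α l ∂μ))
             + ∑ k, ∑ j ∈ Finset.univ.erase k, (α j : ℝ) * A s k j *
                (∫ ω, ∏ l, (Y s.toNNReal ω l) ^
                    (α l - (if l = j then 1 else 0) + if l = k then 1 else 0) ∂μ)) :=
  moment_evolution_equation_general r A hAcont μ ℱ Y hprog hK hmart α t
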